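/- arXiv:1703.07201 — 3 statements merged into one kernel-verified Lean document; each statement's English description precedes it below -/
import Mathlib

section
/- Let f : ℂ → ℂ be continuous on the closed unit disk {z : |z| ≤ 1} and complex differentiable (holomorphic) on the open unit disk {z : |z| < 1}. If the imaginary part of z²·f(z) is zero for every z with |z| = 1, then f(z) = 0 for every z in the closed unit disk. -/
/-!
On the unit circle `g z = z ^ 2 * f z` is real. Applying the maximum modulus principle to
`exp (∓ I g)`, whose modulus is `exp (± Im g)`, shows that `Im g` vanishes on the whole closed
disk. By the open mapping theorem a holomorphic function with real values on a connected open set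
is constant, and `g 0 = 0`, so `g = 0` on the disk. Hence `f = 0` on the punctured disk, and then
everywhere by the identity theorem and continuity up to the boundary.
-/

open Metric Set Filter Topology

namespace Complex

variable {E : Type*} [NormedAddCommGroup E] [NormedSpace ℂ E] [Nontrivial E]

theorem im_le_of_forall_mem_frontier_im_le {g : E → ℂ} {U : Set E}
    (hU : Bornology.IsBounded U) (hg : DiffContOnCl ℂ g U) {C : ℝ}
    (hC : ∀ z ∈ frontier U, (g z).im ≤ C) {z : E} (hz : z ∈ closure U) : (g z).im ≤ C := by
  have hnorm : ∀ w, ‖exp (-I * g w)‖ = Real.exp (g w).im := fun w => by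
    simp [norm_exp, mul_re]
  have hexp : DiffContOnCl ℂ (fun w => exp (-I * g w)) U :=
    ⟨(hg.differentiableOn.const_mul (-I)).cexp, (hg.continuousOn.const_smul (-I)).cexp⟩
  have := norm_le_of_forall_mem_frontier_norm_le hU hexp
    (fun w hw => (hnorm w).trans_le (Real.exp_le_exp.2 (hC w hw))) hz
  rwa [hnorm, Real.exp_le_exp] at this

theorem im_eq_zero_of_forall_mem_frontier_im_eq_zero {g : E → ℂ} {U : Set E}
    (hU : Bornology.IsBounded U) (hg : DiffContOnCl ℂ g U)
    (hfr : ∀ z ∈ frontier U, (g z).im = 0) {z : E} (hz : z ∈ closure U) : (g z).im = 0 := by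
  have hle := im_le_of_forall_mem_frontier_im_le hU hg (fun w hw => (hfr w hw).le) hz
  have hge := im_le_of_forall_mem_frontier_im_le (C := 0) hU hg.neg
    (fun w hw => by simp [hfr w hw]) hz
  simp only [Pi.neg_apply, neg_im, neg_nonpos] at hge
  exact le_antisymm hle hge

end Complex

theorem AnalyticOnNhd.eqOn_const_of_forall_im_eq_zero {g : ℂ → ℂ} {U : Set ℂ}
    (hg : AnalyticOnNhd ℂ g U) (hU : IsPreconnected U) (hUo : IsOpen U)
    (him : ∀ z ∈ U, (g z).im = 0) {z₀ : ℂ} (hz₀ : z₀ ∈ U) : EqOn g (fun _ => g z₀) U := by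
  rcases hg.is_constant_or_isOpen hU with ⟨w, hw⟩ | hopen
  · intro z hz
    rw [hw z hz, hw z₀ hz₀]
  · have himage : g '' U ⊆ interior (Complex.im ⁻¹' {0}) :=
      interior_maximal (image_subset_iff.2 him) (hopen U subset_rfl hUo)
    rw [Complex.interior_preimage_im, interior_singleton, preimage_empty] at himage
    exact absurd (himage (mem_image_of_mem g hz₀)) (notMem_empty _)

theorem stmt_4 (f : ℂ → ℂ)
    (hc : ContinuousOn f (Metric.closedBall 0 1))
    (hd : DifferentiableOn ℂ f (Metric.ball 0 1))
    (hb : ∀ z : ℂ, ‖z‖ = 1 → (z ^ 2 * f z).im = 0) :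
    ∀ z ∈ Metric.closedBall (0 : ℂ) 1, f z = 0 := by
  set g : ℂ → ℂ := fun z => z ^ 2 * f z
  have hg : DiffContOnCl ℂ g (ball 0 1) :=
    ⟨(differentiable_pow 2).differentiableOn.mul hd,
      by rw [closure_ball 0 one_ne_zero]; exact (continuous_pow 2).continuousOn.mul hc⟩
  have him : ∀ z ∈ ball (0 : ℂ) 1, (g z).im = 0 := fun z hz =>
    Complex.im_eq_zero_of_forall_mem_frontier_im_eq_zero isBounded_ball hg
      (by rw [frontier_ball 0 one_ne_zero]; exact fun z hz => hb z (mem_sphere_zero_iff_norm.1 hz))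
      (subset_closure hz)
  have hg0 : EqOn g 0 (ball 0 1) := fun z hz =>
    ((hg.differentiableOn.analyticOnNhd isOpen_ball).eqOn_const_of_forall_im_eq_zero
      (convex_ball 0 1).isPreconnected isOpen_ball him (mem_ball_self one_pos) hz).trans
      (by simp [g])
  have hf_punctured : ∀ᶠ z in 𝓝[≠] (0 : ℂ), f z = 0 := by
    filter_upwards [sdiff_mem_nhdsWithin_compl (ball_mem_nhds (0 : ℂ) one_pos) {0}]
      with z ⟨hz, hz0⟩
    exact (mul_eq_zero.1 (hg0 hz)).resolve_left (pow_ne_zero 2 hz0)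
  have hf0 : EqOn f 0 (ball 0 1) :=
    (hd.analyticOnNhd isOpen_ball).eqOn_zero_of_preconnected_of_frequently_eq_zero
      (convex_ball 0 1).isPreconnected (mem_ball_self one_pos) hf_punctured.frequently
  exact hf0.of_subset_closure hc continuousOn_const ball_subset_closedBall
    (closure_ball 0 one_ne_zero).ge
end

section
/- Work in Euclidean 3-space ℝ³ with its standard inner product ⟨·,·⟩ and cross product ×. Let ξ, N₁, N₂ be unit vectors with ⟨ξ, N₁⟩ = −⟨ξ, N₂⟩. For i = 1, 2 set Tᵢ = ξ − ⟨ξ, Nᵢ⟩·Nᵢ. Let θ be a real number and for i = 1, 2 set T^i_θ = cos θ · Tᵢ + sin θ · (Nᵢ × Tᵢ) and Jᵢ T^i_θ = Nᵢ × T^i_θ. Then ⟨T²_θ, N₁⟩·⟨J₂ T²_θ, N₁⟩ = ⟨T¹_θ, N₂⟩·⟨J₁ T¹_θ, N₂⟩. -/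
/-! The hypothesis `⟨ξ, N₁⟩ = -⟨ξ, N₂⟩` makes both
`⟨T₂, N₁⟩ = -⟨T₁, N₂⟩` and `⟨J₂ T₂, N₁⟩ = -⟨J₁ T₁, N₂⟩` hold (the latter are triple products
`det(N₂, ξ, N₁)` and `det(N₁, ξ, N₂)`). This antisymmetry is linear, so it survives the rotation
`cos θ T + sin θ J T`; since `J` itself rotates by a right angle, it survives applying `J` too.
Both factors on the left are therefore the negatives of those on the right. -/

open Matrix

section Tangential

variable (ξ : Fin 3 → ℝ) {N₁ N₂ : Fin 3 → ℝ}

theorem tangential_dotProduct_antisymm (hopp : ξ ⬝ᵥ N₁ = -(ξ ⬝ᵥ N₂)) :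
    (ξ - (ξ ⬝ᵥ N₂) • N₂) ⬝ᵥ N₁ = -((ξ - (ξ ⬝ᵥ N₁) • N₁) ⬝ᵥ N₂) := by
  simp only [sub_dotProduct, smul_dotProduct, smul_eq_mul, dotProduct_comm N₂ N₁]
  rw [hopp]
  ring

theorem dotProduct_tangential {N : Fin 3 → ℝ} (hN : N ⬝ᵥ N = 1) :
    N ⬝ᵥ (ξ - (ξ ⬝ᵥ N) • N) = 0 := by
  rw [dotProduct_sub, dotProduct_smul, hN, smul_eq_mul, mul_one, dotProduct_comm, sub_self]

theorem cross_tangential (N : Fin 3 → ℝ) : N ⨯₃ (ξ - (ξ ⬝ᵥ N) • N) = N ⨯₃ ξ := by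
  simp only [map_sub, map_smul, cross_self, smul_zero, sub_zero]

theorem cross_dotProduct_antisymm (N₁ N₂ : Fin 3 → ℝ) :
    (N₂ ⨯₃ ξ) ⬝ᵥ N₁ = -((N₁ ⨯₃ ξ) ⬝ᵥ N₂) := by
  rw [dotProduct_comm, dotProduct_comm _ N₂, triple_product_permutation N₁ N₂ ξ,
    ← dotProduct_neg, cross_anticomm, triple_product_permutation]

end Tangential

theorem cross_rotation {N T : Fin 3 → ℝ} (hN : N ⬝ᵥ N = 1) (hT : N ⬝ᵥ T = 0) (c s : ℝ) :
    N ⨯₃ (c • T + s • (N ⨯₃ T)) = (-s) • T + c • (N ⨯₃ T) := by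
  rw [map_add, map_smul, map_smul, cross_cross_eq_smul_sub_smul', hT, hN]
  module

theorem rotation_dotProduct_antisymm {N₁ N₂ T₁ T₂ : Fin 3 → ℝ}
    (hT : T₂ ⬝ᵥ N₁ = -(T₁ ⬝ᵥ N₂)) (hJT : (N₂ ⨯₃ T₂) ⬝ᵥ N₁ = -((N₁ ⨯₃ T₁) ⬝ᵥ N₂)) (c s : ℝ) :
    (c • T₂ + s • (N₂ ⨯₃ T₂)) ⬝ᵥ N₁ = -((c • T₁ + s • (N₁ ⨯₃ T₁)) ⬝ᵥ N₂) := by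
  simp only [add_dotProduct, smul_dotProduct, smul_eq_mul, hT, hJT]
  ring

open Matrix Real in
theorem stmt_5_general (ξ N₁ N₂ : Fin 3 → ℝ)
    (hN₁ : N₁ ⬝ᵥ N₁ = 1) (hN₂ : N₂ ⬝ᵥ N₂ = 1)
    (hopp : ξ ⬝ᵥ N₁ = -(ξ ⬝ᵥ N₂))
    (T₁ T₂ : Fin 3 → ℝ)
    (hT₁ : T₁ = ξ - (ξ ⬝ᵥ N₁) • N₁) (hT₂ : T₂ = ξ - (ξ ⬝ᵥ N₂) • N₂)
    (θ : ℝ) (T₁θ T₂θ : Fin 3 → ℝ)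
    (hT₁θ : T₁θ = Real.cos θ • T₁ + Real.sin θ • (N₁ ⨯₃ T₁))
    (hT₂θ : T₂θ = Real.cos θ • T₂ + Real.sin θ • (N₂ ⨯₃ T₂)) :
    (T₂θ ⬝ᵥ N₁) * ((N₂ ⨯₃ T₂θ) ⬝ᵥ N₁) = (T₁θ ⬝ᵥ N₂) * ((N₁ ⨯₃ T₁θ) ⬝ᵥ N₂) := by
  have hT : T₂ ⬝ᵥ N₁ = -(T₁ ⬝ᵥ N₂) := by
    rw [hT₁, hT₂]
    exact tangential_dotProduct_antisymm ξ hopp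
  have hJT : (N₂ ⨯₃ T₂) ⬝ᵥ N₁ = -((N₁ ⨯₃ T₁) ⬝ᵥ N₂) := by
    rw [hT₁, hT₂, cross_tangential, cross_tangential]
    exact cross_dotProduct_antisymm ξ N₁ N₂
  have hTθ : T₂θ ⬝ᵥ N₁ = -(T₁θ ⬝ᵥ N₂) := by
    rw [hT₁θ, hT₂θ]
    exact rotation_dotProduct_antisymm hT hJT _ _
  have hJTθ : (N₂ ⨯₃ T₂θ) ⬝ᵥ N₁ = -((N₁ ⨯₃ T₁θ) ⬝ᵥ N₂) := by
    rw [hT₁θ, hT₂θ, cross_rotation hN₁ (hT₁ ▸ dotProduct_tangential ξ hN₁),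
      cross_rotation hN₂ (hT₂ ▸ dotProduct_tangential ξ hN₂)]
    exact rotation_dotProduct_antisymm hT hJT _ _
  rw [hTθ, hJTθ, neg_mul_neg]

open Matrix Real in
theorem stmt_5 (ξ N₁ N₂ : Fin 3 → ℝ)
    (hξ : ξ ⬝ᵥ ξ = 1) (hN₁ : N₁ ⬝ᵥ N₁ = 1) (hN₂ : N₂ ⬝ᵥ N₂ = 1)
    (hopp : ξ ⬝ᵥ N₁ = -(ξ ⬝ᵥ N₂))
    (T₁ T₂ : Fin 3 → ℝ)
    (hT₁ : T₁ = ξ - (ξ ⬝ᵥ N₁) • N₁) (hT₂ : T₂ = ξ - (ξ ⬝ᵥ N₂) • N₂)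
    (θ : ℝ) (T₁θ T₂θ : Fin 3 → ℝ)
    (hT₁θ : T₁θ = Real.cos θ • T₁ + Real.sin θ • (N₁ ⨯₃ T₁))
    (hT₂θ : T₂θ = Real.cos θ • T₂ + Real.sin θ • (N₂ ⨯₃ T₂)) :
    (T₂θ ⬝ᵥ N₁) * ((N₂ ⨯₃ T₂θ) ⬝ᵥ N₁) = (T₁θ ⬝ᵥ N₂) * ((N₁ ⨯₃ T₁θ) ⬝ᵥ N₂) :=
  stmt_5_general ξ N₁ N₂ hN₁ hN₂ hopp T₁ T₂ hT₁ hT₂ θ T₁θ T₂θ hT₁θ hT₂θ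
end

section
/- Work in Euclidean 3-space ℝ³ with its standard inner product ⟨·,·⟩ and cross product ×. Let κ, τ, H₁, H₂ be real numbers with H₁² + τ² ≠ 0 and H₂² + τ² ≠ 0, and set αᵢ = (κ − 4τ²)/(2√(Hᵢ² + τ²)) for i = 1, 2. Let N₁, N₂ be unit vectors with ⟨N₁, N₂⟩² ≠ 1 and set u = N₁ × N₂ (a nonzero vector orthogonal to N₁ and N₂). For i = 1, 2 let Tᵢ be a vector orthogonal to Nᵢ, let θᵢ be a real number, and set T^i_θ = cos θᵢ · Tᵢ + sin θᵢ · (Nᵢ × Tᵢ). Let A₁, A₂ be symmetric linear endomorphisms of ℝ³ with A₁N₁ = 0 and A₂N₂ = 0, and define Sᵢ : ℝ³ → ℝ³ by Sᵢ x = Aᵢ x − αᵢ·⟨T^i_θ, x⟩·T^i_θ + (αᵢ·‖Tᵢ‖²/2)·x − Hᵢ·x. Assume: (a) ⟨A₁ u, N₂⟩ + ⟨A₂ u, N₁⟩ = 0; and (b) √(H₁² + τ²)·⟨T²_θ, N₁⟩·⟨N₂ × T²_θ, N₁⟩ = √(H₂² + τ²)·⟨T¹_θ, N₂⟩·⟨N₁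 × T¹_θ, N₂⟩. Then S₁ u is a scalar multiple of u if and only if S₂ u is a scalar multiple of u. -/
infixl:74 " ×₃ " => crossProduct

/-!
Both `S₁ u` and `S₂ u` are orthogonal to their own normal, so each is a multiple of
`u = N₁ × N₂` exactly when it is also orthogonal to the other normal. Writing
`⟨T_θ, u⟩` as a triple product, hypothesis (b) says that the `α`-terms of `⟨S₁ u, N₂⟩` and
`⟨S₂ u, N₁⟩` cancel, and with (a) this gives `⟨S₁ u, N₂⟩ + ⟨S₂ u, N₁⟩ = 0`.
-/

open Matrix

section CrossProduct

variable {R : Type*} [CommRing R]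

lemma cross_ne_zero_of_sq_dot_ne_one {a b : Fin 3 → R} (ha : a ⬝ᵥ a = 1) (hb : b ⬝ᵥ b = 1)
    (hab : (a ⬝ᵥ b) ^ 2 ≠ 1) : a ×₃ b ≠ 0 := by
  intro h
  have := cross_dot_cross a b a b
  rw [h, zero_dotProduct, ha, hb, dotProduct_comm b a] at this
  exact hab (by linear_combination this)

lemma smul_add_smul_cross_dot_self {N T : Fin 3 → R} (hT : T ⬝ᵥ N = 0) (a b : R) :
    (a • T + b • (N ×₃ T)) ⬝ᵥ N = 0 := by
  rw [add_dotProduct, smul_dotProduct, smul_dotProduct, hT, dotProduct_comm, dot_self_cross]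
  simp

variable {F : Type*} [Field F]

lemma exists_smul_eq_of_cross_eq_zero {v w : Fin 3 → F} (hw : w ≠ 0)
    (h : w ×₃ v = 0) : ∃ c : F, v = c • w := by
  by_contra! hne
  exact crossProduct_ne_zero_iff_linearIndependent.mpr
    ((LinearIndependent.pair_iff' hw).mpr fun c => (hne c).symm) h

lemma exists_smul_cross_iff {a b v : Fin 3 → F} (hab : a ×₃ b ≠ 0) :
    (∃ c : F, v = c • a ×₃ b) ↔ v ⬝ᵥ a = 0 ∧ v ⬝ᵥ b = 0 := by
  constructor
  · rintro ⟨c, rfl⟩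
    rw [smul_dotProduct, smul_dotProduct, dotProduct_comm, dot_self_cross, dotProduct_comm,
      dot_cross_self, smul_zero]
    exact ⟨rfl, rfl⟩
  · rintro ⟨hva, hvb⟩
    refine exists_smul_eq_of_cross_eq_zero hab ?_
    rw [← cross_anticomm, cross_cross_eq_smul_sub_smul', hvb, dotProduct_comm, hva]
    simp

end CrossProduct

section ARShape

variable (A : (Fin 3 → ℝ) →ₗ[ℝ] (Fin 3 → ℝ)) (α H : ℝ) (T Tθ : Fin 3 → ℝ)

/-- The Abresch–Rosenberg shape operator `S_AR`; `T` is the tangential part of the vertical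
Killing field and `Tθ` its rotation by `θ` in the tangent plane. -/
noncomputable def arShape (x : Fin 3 → ℝ) : Fin 3 → ℝ :=
  A x - (α * (Tθ ⬝ᵥ x)) • Tθ + (α * (T ⬝ᵥ T) / 2) • x - H • x

lemma arShape_dot_of_dot_eq_zero {x y : Fin 3 → ℝ} (hxy : x ⬝ᵥ y = 0) :
    arShape A α H T Tθ x ⬝ᵥ y = A x ⬝ᵥ y - α * (Tθ ⬝ᵥ x) * (Tθ ⬝ᵥ y) := by
  simp only [arShape, sub_dotProduct, add_dotProduct, smul_dotProduct, hxy, smul_eq_mul]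
  ring

lemma arShape_dot_normal {N x : Fin 3 → ℝ} (hA : ∀ x y, A x ⬝ᵥ y = x ⬝ᵥ A y) (hAN : A N = 0)
    (hTθ : Tθ ⬝ᵥ N = 0) (hx : x ⬝ᵥ N = 0) : arShape A α H T Tθ x ⬝ᵥ N = 0 := by
  rw [arShape_dot_of_dot_eq_zero A α H T Tθ hx, hA, hAN, hTθ, dotProduct_zero]
  ring

lemma arShape_cross_dot_add_arShape_cross_dot (A₁ A₂ : (Fin 3 → ℝ) →ₗ[ℝ] (Fin 3 → ℝ))
    (α₁ α₂ H₁ H₂ : ℝ) (T₁ T₂ T₁θ T₂θ N₁ N₂ : Fin 3 → ℝ) :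
    arShape A₁ α₁ H₁ T₁ T₁θ (N₁ ×₃ N₂) ⬝ᵥ N₂ + arShape A₂ α₂ H₂ T₂ T₂θ (N₁ ×₃ N₂) ⬝ᵥ N₁ =
      A₁ (N₁ ×₃ N₂) ⬝ᵥ N₂ + A₂ (N₁ ×₃ N₂) ⬝ᵥ N₁ +
        α₁ * ((T₁θ ⬝ᵥ N₂) * (N₁ ×₃ T₁θ ⬝ᵥ N₂)) - α₂ * ((T₂θ ⬝ᵥ N₁) * (N₂ ×₃ T₂θ ⬝ᵥ N₁)) := by
  have ht₁ : T₁θ ⬝ᵥ N₁ ×₃ N₂ = -(N₁ ×₃ T₁θ ⬝ᵥ N₂) := by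
    rw [triple_product_permutation, triple_product_permutation, ← cross_anticomm,
      dotProduct_neg, dotProduct_comm]
  have ht₂ : T₂θ ⬝ᵥ N₁ ×₃ N₂ = N₂ ×₃ T₂θ ⬝ᵥ N₁ := by
    rw [triple_product_permutation, dotProduct_comm]
  rw [arShape_dot_of_dot_eq_zero _ _ _ _ _ (by rw [dotProduct_comm, dot_cross_self]),
    arShape_dot_of_dot_eq_zero _ _ _ _ _ (by rw [dotProduct_comm, dot_self_cross]), ht₁, ht₂]
  ring

end ARShape

open Matrix in
theorem stmt_8 (κ τ H₁ H₂ : ℝ)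
    (h₁ : H₁ ^ 2 + τ ^ 2 ≠ 0) (h₂ : H₂ ^ 2 + τ ^ 2 ≠ 0)
    (α₁ α₂ : ℝ)
    (hα₁ : α₁ = (κ - 4 * τ ^ 2) / (2 * Real.sqrt (H₁ ^ 2 + τ ^ 2)))
    (hα₂ : α₂ = (κ - 4 * τ ^ 2) / (2 * Real.sqrt (H₂ ^ 2 + τ ^ 2)))
    (N₁ N₂ : Fin 3 → ℝ)
    (hN₁ : N₁ ⬝ᵥ N₁ = 1) (hN₂ : N₂ ⬝ᵥ N₂ = 1)
    (hangle : (N₁ ⬝ᵥ N₂) ^ 2 ≠ 1)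
    (u : Fin 3 → ℝ) (hu : u = N₁ ×₃ N₂)
    (T₁ T₂ : Fin 3 → ℝ) (hT₁ : T₁ ⬝ᵥ N₁ = 0) (hT₂ : T₂ ⬝ᵥ N₂ = 0)
    (θ₁ θ₂ : ℝ) (T₁θ T₂θ : Fin 3 → ℝ)
    (hT₁θ : T₁θ = Real.cos θ₁ • T₁ + Real.sin θ₁ • (N₁ ×₃ T₁))
    (hT₂θ : T₂θ = Real.cos θ₂ • T₂ + Real.sin θ₂ • (N₂ ×₃ T₂))
    (A₁ A₂ : (Fin 3 → ℝ) →ₗ[ℝ] (Fin 3 → ℝ))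
    (hA₁sym : ∀ x y : Fin 3 → ℝ, (A₁ x) ⬝ᵥ y = x ⬝ᵥ (A₁ y))
    (hA₂sym : ∀ x y : Fin 3 → ℝ, (A₂ x) ⬝ᵥ y = x ⬝ᵥ (A₂ y))
    (hA₁N : A₁ N₁ = 0) (hA₂N : A₂ N₂ = 0)
    (S₁ S₂ : (Fin 3 → ℝ) → (Fin 3 → ℝ))
    (hS₁ : ∀ x, S₁ x = A₁ x - (α₁ * (T₁θ ⬝ᵥ x)) • T₁θ + (α₁ * (T₁ ⬝ᵥ T₁) / 2) • x - H₁ • x)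
    (hS₂ : ∀ x, S₂ x = A₂ x - (α₂ * (T₂θ ⬝ᵥ x)) • T₂θ + (α₂ * (T₂ ⬝ᵥ T₂) / 2) • x - H₂ • x)
    (ha : (A₁ u) ⬝ᵥ N₂ + (A₂ u) ⬝ᵥ N₁ = 0)
    (hb : Real.sqrt (H₁ ^ 2 + τ ^ 2) * ((T₂θ ⬝ᵥ N₁) * ((N₂ ×₃ T₂θ) ⬝ᵥ N₁)) =
          Real.sqrt (H₂ ^ 2 + τ ^ 2) * ((T₁θ ⬝ᵥ N₂) * ((N₁ ×₃ T₁θ) ⬝ᵥ N₂))) :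
    (∃ c : ℝ, S₁ u = c • u) ↔ (∃ c : ℝ, S₂ u = c • u) := by
  obtain rfl : S₁ = arShape A₁ α₁ H₁ T₁ T₁θ := funext hS₁
  obtain rfl : S₂ = arShape A₂ α₂ H₂ T₂ T₂θ := funext hS₂
  subst hu
  have hαb : α₁ * ((T₁θ ⬝ᵥ N₂) * ((N₁ ×₃ T₁θ) ⬝ᵥ N₂)) =
      α₂ * ((T₂θ ⬝ᵥ N₁) * ((N₂ ×₃ T₂θ) ⬝ᵥ N₁)) := by
    have hr₁ := Real.sqrt_ne_zero'.2 ((by positivity : 0 ≤ H₁ ^ 2 + τ ^ 2).lt_of_ne' h₁)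
    have hr₂ := Real.sqrt_ne_zero'.2 ((by positivity : 0 ≤ H₂ ^ 2 + τ ^ 2).lt_of_ne' h₂)
    rw [hα₁, hα₂]
    field_simp
    linear_combination (κ - 4 * τ ^ 2) * hb.symm
  have huN₁ : N₁ ×₃ N₂ ⬝ᵥ N₁ = 0 := by rw [dotProduct_comm, dot_self_cross]
  have huN₂ : N₁ ×₃ N₂ ⬝ᵥ N₂ = 0 := by rw [dotProduct_comm, dot_cross_self]
  have hS₁N₁ := arShape_dot_normal A₁ α₁ H₁ T₁ T₁θ hA₁sym hA₁N
    (hT₁θ ▸ smul_add_smul_cross_dot_self hT₁ _ _) huN₁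
  have hS₂N₂ := arShape_dot_normal A₂ α₂ H₂ T₂ T₂θ hA₂sym hA₂N
    (hT₂θ ▸ smul_add_smul_cross_dot_self hT₂ _ _) huN₂
  have hcross := arShape_cross_dot_add_arShape_cross_dot A₁ A₂ α₁ α₂ H₁ H₂ T₁ T₂ T₁θ T₂θ N₁ N₂
  rw [ha, hαb, zero_add, sub_self] at hcross
  rw [exists_smul_cross_iff (cross_ne_zero_of_sq_dot_ne_one hN₁ hN₂ hangle),
    exists_smul_cross_iff (cross_ne_zero_of_sq_dot_ne_one hN₁ hN₂ hangle)]
  constructor <;> rintro ⟨hv₁, hv₂⟩ <;> constructor <;> linarith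
end
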